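/- Let n ∈ (2,3) and C_osc ≥ 1. For every L > 0, every positive integer N with h = L/N, and every N-periodic sequence u with u_i > 0 satisfying the oscillation condition u_i ≤ C_osc u_{i+1} and u_i ≤ C_osc u_{i−1} for all i, one has A_Δ^h(u, −Δ_h u) ≥ ((n−2)(3−n)/3) · ((1+C_osc)^{n−4}/2) · h Σ_i u_i^{n−4} ( d_i² d_{i−1}² + d_i⁴ ), where A_Δ^h(u, −Δ_h u) denotes A_Δ^h(u, v) with v_i = −(Δ_h u)_i. -/

import Mathlib

open Finset

/-- Forward difference quotient `d_i = (u_{i+1} - u_i)/h`. -/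
noncomputable def dq (h : ℝ) (u : ℤ → ℝ) (i : ℤ) : ℝ := (u (i + 1) - u i) / h

/-- Discrete Laplacian `(Δ_h u)_i = (u_{i+1} - 2u_i + u_{i-1})/h²`. -/
noncomputable def lap (h : ℝ) (u : ℤ → ℝ) (i : ℤ) : ℝ :=
  (u (i + 1) - 2 * u i + u (i - 1)) / h ^ 2

/-- The discrete operator `A_Δ^h(u,v)`. -/
noncomputable def Adelta (n h : ℝ) (N : ℕ) (u v : ℤ → ℝ) : ℝ :=
  -((n - 2) / 6) * h * (∑ i ∈ Icc (1 : ℤ) (N : ℤ),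
      u i ^ (n - 3) * ((dq h u (i - 1)) ^ 2 + (dq h u i) ^ 2) * v i)
  - (n - 2) / 6 * h * (∑ i ∈ Icc (1 : ℤ) (N : ℤ),
      ((u i ^ (n - 3) + u (i + 1) ^ (n - 3)) * dq h u i
        + (u (i - 1) ^ (n - 3) + u i ^ (n - 3)) * dq h u (i - 1))
      * ((u (i + 1) - u (i - 1)) / (2 * h)) * v i)

/-- auxiliary: the "good" summand. -/
noncomputable def gfun (n h : ℝ) (u : ℤ → ℝ) (i : ℤ) : ℝ :=
  (u i ^ (n - 3) - u (i + 1) ^ (n - 3)) * dq h u i ^ 3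
  + (1 / 2) * (u (i - 1) ^ (n - 3) - u i ^ (n - 3)) * dq h u (i - 1) * dq h u i ^ 2
  + (1 / 2) * (u i ^ (n - 3) - u (i + 1) ^ (n - 3)) * dq h u (i - 1) ^ 2 * dq h u i

/-- auxiliary: the telescoping summand. -/
noncomputable def Efun (n h : ℝ) (u : ℤ → ℝ) (i : ℤ) : ℝ :=
  (1 / 2) * (u i ^ (n - 3) + 3 * u (i + 1) ^ (n - 3)) * dq h u i ^ 3

lemma sum_shift (N : ℕ) (f : ℤ → ℝ) (hf : ∀ i : ℤ, f (i + (N : ℤ)) = f i) :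
    ∑ i ∈ Icc (1 : ℤ) (N : ℤ), f (i + 1) = ∑ i ∈ Icc (1 : ℤ) (N : ℤ), f i := by
  have hmap : ∑ i ∈ Icc (1 : ℤ) (N : ℤ), f (i + 1) = ∑ i ∈ Icc (2 : ℤ) ((N : ℤ) + 1), f i := by
    rw [show Icc (2 : ℤ) ((N : ℤ) + 1) = (Icc (1 : ℤ) (N : ℤ)).map (addRightEmbedding 1) from by
      rw [Finset.map_add_right_Icc]; norm_num]
    rw [Finset.sum_map]
    simp only [addRightEmbedding_apply]
  have e1 : Icc (1 : ℤ) ((N : ℤ) + 1) = insert ((N : ℤ) + 1) (Icc (1 : ℤ) (N : ℤ)) := by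
    ext x; simp only [Finset.mem_Icc, Finset.mem_insert]; omega
  have e2 : Icc (1 : ℤ) ((N : ℤ) + 1) = insert (1 : ℤ) (Icc (2 : ℤ) ((N : ℤ) + 1)) := by
    ext x; simp only [Finset.mem_Icc, Finset.mem_insert]; omega
  have n1 : ((N : ℤ) + 1) ∉ Icc (1 : ℤ) (N : ℤ) := by simp only [Finset.mem_Icc]; omega
  have n2 : (1 : ℤ) ∉ Icc (2 : ℤ) ((N : ℤ) + 1) := by simp only [Finset.mem_Icc]; omega
  have s1 : ∑ i ∈ Icc (1 : ℤ) ((N : ℤ) + 1), f i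
      = f ((N : ℤ) + 1) + ∑ i ∈ Icc (1 : ℤ) (N : ℤ), f i := by
    rw [e1, Finset.sum_insert n1]
  have s2 : ∑ i ∈ Icc (1 : ℤ) ((N : ℤ) + 1), f i
      = f 1 + ∑ i ∈ Icc (2 : ℤ) ((N : ℤ) + 1), f i := by
    rw [e2, Finset.sum_insert n2]
  have hfN : f ((N : ℤ) + 1) = f 1 := by
    rw [show (N : ℤ) + 1 = 1 + (N : ℤ) from by ring, hf]
  rw [hmap]; linarith

/-- MVT estimate, ordered version. -/
lemma mvt_aux (p x y M : ℝ) (hp : p < 0) (hx : 0 < x) (hxy : x ≤ y) (hyM : y ≤ M) :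
    (-p) * M ^ (p - 1) * (y - x) ^ 2 ≤ (x ^ p - y ^ p) * (y - x) := by
  rcases eq_or_lt_of_le hxy with rfl | hlt
  · simp
  · have hy : 0 < y := hx.trans hlt
    have hcont : ContinuousOn (fun t : ℝ => t ^ p) (Set.Icc x y) :=
      ContinuousOn.rpow_const continuousOn_id
        (fun t ht => Or.inl (ne_of_gt (lt_of_lt_of_le hx ht.1)))
    have hderiv : ∀ t ∈ Set.Ioo x y,
        HasDerivAt (fun t : ℝ => t ^ p) (p * t ^ (p - 1)) t :=
      fun t ht => Real.hasDerivAt_rpow_const (Or.inl (ne_of_gt (hx.trans ht.1)))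
    obtain ⟨c, hc, hc'⟩ := exists_hasDerivAt_eq_slope (fun t : ℝ => t ^ p)
      (fun t => p * t ^ (p - 1)) hlt hcont hderiv
    have hcpos : 0 < c := hx.trans hc.1
    have hyx : y - x ≠ 0 := sub_ne_zero.mpr (ne_of_gt hlt)
    rw [eq_div_iff hyx] at hc'
    have hcM : M ^ (p - 1) ≤ c ^ (p - 1) :=
      Real.rpow_le_rpow_of_nonpos hcpos (le_trans hc.2.le hyM) (by linarith)
    have hx2 : (x ^ p - y ^ p) * (y - x) = (-p) * c ^ (p - 1) * (y - x) ^ 2 := by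
      linear_combination (y - x) * hc'
    rw [hx2]
    exact mul_le_mul_of_nonneg_right
      (mul_le_mul_of_nonneg_left hcM (by linarith)) (sq_nonneg _)

/-- MVT estimate, symmetric version. -/
lemma mvt_pow (p x y M : ℝ) (hp : p < 0) (hx : 0 < x) (hy : 0 < y)
    (hxM : x ≤ M) (hyM : y ≤ M) :
    (-p) * M ^ (p - 1) * (y - x) ^ 2 ≤ (x ^ p - y ^ p) * (y - x) := by
  rcases le_total x y with hxy | hyx
  · exact mvt_aux p x y M hp hx hxy hyM
  · have key := mvt_aux p y x M hp hy hyx hxM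
    have e1 : (-p) * M ^ (p - 1) * (y - x) ^ 2 = (-p) * M ^ (p - 1) * (x - y) ^ 2 := by ring
    have e2 : (x ^ p - y ^ p) * (y - x) = (y ^ p - x ^ p) * (x - y) := by ring
    rw [e1, e2]; exact key

lemma pointwise_id (n h : ℝ) (h0 : h ≠ 0) (u : ℤ → ℝ) (i : ℤ) :
    -((n - 2) / 6) * h * (u i ^ (n - 3) * ((dq h u (i - 1)) ^ 2 + (dq h u i) ^ 2)
        * (-(lap h u i)))
    - (n - 2) / 6 * h * (((u i ^ (n - 3) + u (i + 1) ^ (n - 3)) * dq h u i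
          + (u (i - 1) ^ (n - 3) + u i ^ (n - 3)) * dq h u (i - 1))
        * ((u (i + 1) - u (i - 1)) / (2 * h)) * (-(lap h u i)))
    = (n - 2) / 6 * gfun n h u i + (n - 2) / 6 * (Efun n h u i - Efun n h u (i - 1)) := by
  simp only [gfun, Efun, dq, lap]
  rw [show i - 1 + 1 = i from by ring]
  field_simp
  ring

/-- lower bound for `A_Δ^h(u, -Δ_h u)` under the oscillation condition. -/
theorem statement4 (n Cosc : ℝ) (hn : n ∈ Set.Ioo (2 : ℝ) 3) (hCosc : 1 ≤ Cosc)
    (L : ℝ) (hL : 0 < L) (N : ℕ) (hN : 0 < N) (h : ℝ) (hh : h = L / N)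
    (u : ℤ → ℝ) (hper : ∀ i : ℤ, u (i + (N : ℤ)) = u i) (hpos : ∀ i : ℤ, 0 < u i)
    (hosc : ∀ i : ℤ, u i ≤ Cosc * u (i + 1) ∧ u i ≤ Cosc * u (i - 1)) :
    Adelta n h N u (fun i => -(lap h u i)) ≥
      (n - 2) * (3 - n) / 3 * ((1 + Cosc) ^ (n - 4) / 2) * h *
        ∑ i ∈ Icc (1 : ℤ) (N : ℤ),
          u i ^ (n - 4) * ((dq h u i) ^ 2 * (dq h u (i - 1)) ^ 2 + (dq h u i) ^ 4) := by
  obtain ⟨hn2, hn3⟩ := hn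
  have hNpos : (0 : ℝ) < (N : ℝ) := by exact_mod_cast hN
  have hhpos : 0 < h := by rw [hh]; positivity
  have h0 : h ≠ 0 := ne_of_gt hhpos
  -- the algebraic identity
  have key : Adelta n h N u (fun i => -(lap h u i))
      = ∑ i ∈ Icc (1 : ℤ) (N : ℤ),
          ((n - 2) / 6 * gfun n h u i + (n - 2) / 6 * (Efun n h u i - Efun n h u (i - 1))) := by
    unfold Adelta
    rw [Finset.mul_sum, Finset.mul_sum, ← Finset.sum_sub_distrib]
    exact Finset.sum_congr rfl fun i _ => pointwise_id n h h0 u i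
  -- telescoping
  have hEper : ∀ i : ℤ, Efun n h u (i + (N : ℤ)) = Efun n h u i := by
    intro i
    simp only [Efun, dq]
    rw [show i + (N : ℤ) + 1 = i + 1 + (N : ℤ) from by ring, hper (i + 1), hper i]
  have tele : ∑ i ∈ Icc (1 : ℤ) (N : ℤ), (Efun n h u i - Efun n h u (i - 1)) = 0 := by
    rw [Finset.sum_sub_distrib]
    have hsh := sum_shift N (fun j => Efun n h u (j - 1)) (fun j => by
      show Efun n h u (j + (N : ℤ) - 1) = Efun n h u (j - 1)
      rw [show j + (N : ℤ) - 1 = (j - 1) + (N : ℤ) from by ring, hEper])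
    simp only [add_sub_cancel_right] at hsh
    rw [← hsh, sub_self]
  have key2 : Adelta n h N u (fun i => -(lap h u i))
      = (n - 2) / 6 * ∑ i ∈ Icc (1 : ℤ) (N : ℤ), gfun n h u i := by
    rw [key, Finset.sum_add_distrib, ← Finset.mul_sum, ← Finset.mul_sum, tele, mul_zero,
      add_zero]
  -- difference-quotient identity
  have hdqh : ∀ j : ℤ, u (j + 1) - u j = h * dq h u j := by
    intro j; simp only [dq]; field_simp
  -- two MVT bounds
  have A1 : ∀ i : ℤ, (3 - n) * (1 + Cosc) ^ (n - 4) * u i ^ (n - 4) * h * dq h u i ^ 2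
      ≤ (u i ^ (n - 3) - u (i + 1) ^ (n - 3)) * dq h u i := by
    intro i
    have hu1 : u (i + 1) ≤ Cosc * u i := by
      have hx := (hosc (i + 1)).2
      rwa [show i + 1 - 1 = i from by ring] at hx
    have hM1 : u (i + 1) ≤ (1 + Cosc) * u i := by nlinarith [hpos i]
    have hM0 : u i ≤ (1 + Cosc) * u i := by nlinarith [hpos i]
    have hmvt := mvt_pow (n - 3) (u i) (u (i + 1)) ((1 + Cosc) * u i)
      (by linarith) (hpos i) (hpos (i + 1)) hM0 hM1
    rw [Real.mul_rpow (by linarith : (0 : ℝ) ≤ 1 + Cosc) (hpos i).le] at hmvt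
    rw [show (n - 3 - 1 : ℝ) = n - 4 from by ring,
      show (-(n - 3) : ℝ) = 3 - n from by ring] at hmvt
    rw [hdqh i] at hmvt
    nlinarith [hmvt, hhpos]
  have A2 : ∀ i : ℤ, (3 - n) * (1 + Cosc) ^ (n - 4) * u i ^ (n - 4) * h * dq h u (i - 1) ^ 2
      ≤ (u (i - 1) ^ (n - 3) - u i ^ (n - 3)) * dq h u (i - 1) := by
    intro i
    have hu1 : u (i - 1) ≤ Cosc * u i := by
      have hx := (hosc (i - 1)).1
      rwa [show i - 1 + 1 = i from by ring] at hx
    have hM1 : u (i - 1) ≤ (1 + Cosc) * u i := by nlinarith [hpos i]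
    have hM0 : u i ≤ (1 + Cosc) * u i := by nlinarith [hpos i]
    have hmvt := mvt_pow (n - 3) (u (i - 1)) (u i) ((1 + Cosc) * u i)
      (by linarith) (hpos (i - 1)) (hpos i) hM1 hM0
    rw [Real.mul_rpow (by linarith : (0 : ℝ) ≤ 1 + Cosc) (hpos i).le] at hmvt
    rw [show (n - 3 - 1 : ℝ) = n - 4 from by ring,
      show (-(n - 3) : ℝ) = 3 - n from by ring] at hmvt
    have hd := hdqh (i - 1)
    rw [show i - 1 + 1 = i from by ring] at hd
    rw [hd] at hmvt
    nlinarith [hmvt, hhpos]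
  -- pointwise lower bound on `gfun`
  have gbound : ∀ i ∈ Icc (1 : ℤ) (N : ℤ),
      (3 - n) * (1 + Cosc) ^ (n - 4) * h *
        (u i ^ (n - 4) * ((dq h u i) ^ 2 * (dq h u (i - 1)) ^ 2 + (dq h u i) ^ 4))
      ≤ gfun n h u i := by
    intro i _
    have a1 := A1 i
    have a2 := A2 i
    simp only [gfun]
    nlinarith [mul_le_mul_of_nonneg_right a1 (sq_nonneg (dq h u i)),
      mul_le_mul_of_nonneg_right a2 (sq_nonneg (dq h u i)),
      mul_le_mul_of_nonneg_right a1 (sq_nonneg (dq h u (i - 1)))]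
  rw [ge_iff_le, key2]
  calc (n - 2) * (3 - n) / 3 * ((1 + Cosc) ^ (n - 4) / 2) * h *
        ∑ i ∈ Icc (1 : ℤ) (N : ℤ),
          u i ^ (n - 4) * ((dq h u i) ^ 2 * (dq h u (i - 1)) ^ 2 + (dq h u i) ^ 4)
      = (n - 2) / 6 * ∑ i ∈ Icc (1 : ℤ) (N : ℤ),
          ((3 - n) * (1 + Cosc) ^ (n - 4) * h *
            (u i ^ (n - 4) * ((dq h u i) ^ 2 * (dq h u (i - 1)) ^ 2 + (dq h u i) ^ 4))) := by
        rw [Finset.mul_sum, Finset.mul_sum]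
        exact Finset.sum_congr rfl fun i _ => by ring
    _ ≤ (n - 2) / 6 * ∑ i ∈ Icc (1 : ℤ) (N : ℤ), gfun n h u i :=
        mul_le_mul_of_nonneg_left (Finset.sum_le_sum gbound) (by linarith)
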